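/- Let A ∈ ℝ^{m×r} satisfy Aᵀ A = K I_r with K > 0, let F ∈ ℝ^{m×s}, and P > 0. Among all D ∈ ℝ^{r×s} with ‖D‖_F² = 2P/K, the Frobenius distance ‖F − A D‖_F is minimized by D* = √(2P/(K ‖AᵀF‖_F²)) · Aᵀ F, provided AᵀF ≠ 0. -/
import Mathlib

open Matrix

/-- Squared Frobenius norm, `‖M‖_F² = Tr(MᵀM)`. -/
def frobSq {m n : Type*} [Fintype m] [Fintype n]
    (M : Matrix m n ℝ) : ℝ := (Mᵀ * M).trace

lemma frobSq_eq_sum {m n : Type*} [Fintype m] [Fintype n] (M : Matrix m n ℝ) :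
    frobSq M = ∑ j, ∑ i, M i j ^ 2 := by
  simp [frobSq, Matrix.trace, Matrix.mul_apply, Matrix.diag, sq]

lemma frobSq_nonneg {m n : Type*} [Fintype m] [Fintype n] (M : Matrix m n ℝ) :
    0 ≤ frobSq M := by
  rw [frobSq_eq_sum]; positivity

lemma frobSq_pos {m n : Type*} [Fintype m] [Fintype n] (M : Matrix m n ℝ)
    (hM : M ≠ 0) : 0 < frobSq M := by
  rcases (frobSq_nonneg M).lt_or_eq with h | h
  · exact h
  exfalso; apply hM
  rw [frobSq_eq_sum] at h
  ext i j
  have h1 := (Finset.sum_eq_zero_iff_of_nonneg (fun j _ => by positivity)).mp h.symm j (Finset.mem_univ j)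
  have h2 := (Finset.sum_eq_zero_iff_of_nonneg (fun i _ => sq_nonneg _)).mp h1 i (Finset.mem_univ i)
  simpa using pow_eq_zero_iff (n := 2) (by norm_num) |>.mp h2

lemma trace_mul_sum {m n : Type*} [Fintype m] [Fintype n] (M N : Matrix m n ℝ) :
    (Mᵀ * N).trace = ∑ j, ∑ i, M i j * N i j := by
  simp [Matrix.trace, Matrix.mul_apply, Matrix.diag]

/-- KKT-based digital precoder update for the sub-connected architecture: on
the sphere `‖D‖_F² = 2P/K`, the distance `‖F − A D‖_F` is minimized by the
scaled matched filter `D* = √(2P/(K ‖AᵀF‖_F²)) AᵀF`. -/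
theorem sub_connected_digital_precoder_optimal (m r s : ℕ) (K P : ℝ)
    (hK : 0 < K) (hP : 0 < P)
    (A : Matrix (Fin m) (Fin r) ℝ) (hA : Aᵀ * A = K • 1)
    (F : Matrix (Fin m) (Fin s) ℝ) (hAF : Aᵀ * F ≠ 0) :
    frobSq (Real.sqrt (2 * P / (K * frobSq (Aᵀ * F))) • (Aᵀ * F)) =
        2 * P / K ∧
    ∀ D : Matrix (Fin r) (Fin s) ℝ, frobSq D = 2 * P / K →
      frobSq (F - A * (Real.sqrt (2 * P / (K * frobSq (Aᵀ * F))) • (Aᵀ * F)))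
        ≤ frobSq (F - A * D) := by
  set G := Aᵀ * F with hG
  set g := frobSq G with hg
  have hgpos : 0 < g := frobSq_pos G hAF
  set c := Real.sqrt (2 * P / (K * g)) with hc
  have hcsq : c ^ 2 = 2 * P / (K * g) := Real.sq_sqrt (by positivity)
  have hcpos : 0 < c := Real.sqrt_pos.mpr (by positivity)
  -- frobSq of scaled matched filter
  have hsmul : frobSq (c • G) = c ^ 2 * g := by
    simp only [frobSq, Matrix.transpose_smul, Matrix.smul_mul, Matrix.mul_smul,
      smul_smul, Matrix.trace_smul, smul_eq_mul, sq]
    ring_nf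
    rfl
  have h1 : frobSq (c • G) = 2 * P / K := by
    rw [hsmul, hcsq]; field_simp
  refine ⟨h1, ?_⟩
  -- expansion lemma
  have expand : ∀ D : Matrix (Fin r) (Fin s) ℝ,
      frobSq (F - A * D) = frobSq F - 2 * (Gᵀ * D).trace + K * frobSq D := by
    intro D
    have key : (F - A * D)ᵀ * (F - A * D)
        = Fᵀ * F - Fᵀ * (A * D) - ((A * D)ᵀ * F - (A * D)ᵀ * (A * D)) := by
      rw [Matrix.transpose_sub, Matrix.sub_mul, Matrix.mul_sub, Matrix.mul_sub]
    have t1 : (Fᵀ * (A * D)).trace = (Gᵀ * D).trace := by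
      rw [hG, Matrix.transpose_mul, Matrix.transpose_transpose, Matrix.mul_assoc]
    have t2 : ((A * D)ᵀ * F).trace = (Gᵀ * D).trace := by
      rw [← Matrix.trace_transpose ((A * D)ᵀ * F), Matrix.transpose_mul,
        Matrix.transpose_transpose, t1]
    have t3 : ((A * D)ᵀ * (A * D)).trace = K * frobSq D := by
      rw [Matrix.transpose_mul, Matrix.mul_assoc, ← Matrix.mul_assoc Aᵀ, hA]
      rw [Matrix.smul_mul, Matrix.one_mul, Matrix.mul_smul, Matrix.trace_smul]
      rfl
    simp only [frobSq, key, Matrix.trace_sub, t1, t2, t3]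
    simp only [frobSq] at t3 ⊢
    ring
  intro D hD
  rw [expand, expand, hD, h1]
  have hGc : (Gᵀ * (c • G)).trace = c * g := by
    rw [Matrix.mul_smul, Matrix.trace_smul, smul_eq_mul]
    rfl
  rw [hGc]
  -- suffices to show trace(Gᵀ D) ≤ c * g
  have hCS : ((Gᵀ * D).trace) ^ 2 ≤ g * (2 * P / K) := by
    rw [trace_mul_sum, hg, frobSq_eq_sum, ← hD, frobSq_eq_sum]
    calc (∑ j, ∑ i, G i j * D i j) ^ 2
        = (∑ p : Fin s × Fin r, G p.2 p.1 * D p.2 p.1) ^ 2 := by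
          rw [Fintype.sum_prod_type]
      _ ≤ (∑ p : Fin s × Fin r, G p.2 p.1 ^ 2) * ∑ p : Fin s × Fin r, D p.2 p.1 ^ 2 :=
          Finset.sum_mul_sq_le_sq_mul_sq _ _ _
      _ = (∑ j, ∑ i, G i j ^ 2) * ∑ j, ∑ i, D i j ^ 2 := by
          rw [Fintype.sum_prod_type, Fintype.sum_prod_type]
  have hcg : (c * g) ^ 2 = g * (2 * P / K) := by
    rw [mul_pow, hcsq]; field_simp
  have ht : (Gᵀ * D).trace ≤ c * g := by
    nlinarith [hCS, hcg, mul_pos hcpos hgpos]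
  linarith
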